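/- arXiv:2309.11401 — 2 statements merged into one kernel-verified Lean document; each statement's English description precedes it below -/
import Mathlib

section
/- Strict monotonicity of the Bayes rule: if G is not a Dirac point mass (i.e., G is not concentrated at a single point), then the posterior mean δ_G is strictly increasing on ℝ; if G is a point mass at θ₀ then δ_G is constantly equal to θ₀. -/
/-! Write `k y θ = φ((y - θ)/σ)`. For `y₁ < y₂`, the cross-difference
`(∫ θ k y₂ θ dG)(∫ k y₁ dG) - (∫ θ k y₁ θ dG)(∫ k y₂ dG)` is half the `G ⊗ G`-integral of the
symmetrised function `(θ - θ')(k y₂ θ · k y₁ θ' - k y₁ θ · k y₂ θ')`. The Gaussian location kernel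
is strictly totally positive of order two, so this function is positive off the diagonal, and
the off-diagonal has positive `G ⊗ G`-mass unless `G` is a point mass. -/

open MeasureTheory Set

/-- The standard normal density `φ(z) = (2π)^{-1/2} e^{-z²/2}`. -/
noncomputable def stdNormalPDF (z : ℝ) : ℝ := (Real.sqrt (2 * Real.pi))⁻¹ * Real.exp (-z ^ 2 / 2)

/-- The posterior mean `δ_G(y)`. -/
noncomputable def postMean (σ : ℝ) (G : Measure ℝ) (y : ℝ) : ℝ :=
  (∫ θ, θ * stdNormalPDF ((y - θ) / σ) ∂G) / ∫ θ, stdNormalPDF ((y - θ) / σ) ∂G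

open Real

lemma stdNormalPDF_pos (z : ℝ) : 0 < stdNormalPDF z := by
  unfold stdNormalPDF
  positivity

@[fun_prop]
lemma continuous_stdNormalPDF : Continuous stdNormalPDF := by
  unfold stdNormalPDF
  fun_prop

lemma stdNormalPDF_le (z : ℝ) : stdNormalPDF z ≤ (√(2 * π))⁻¹ :=
  mul_le_of_le_one_right (by positivity) (exp_le_one_iff.2 (by nlinarith [sq_nonneg z]))

lemma abs_mul_stdNormalPDF_le (z : ℝ) : |z| * stdNormalPDF z ≤ (√(2 * π))⁻¹ := by
  have hz : |z| ≤ exp (z ^ 2 / 2) :=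
    calc |z| ≤ z ^ 2 / 2 + 1 := by nlinarith [sq_abs z, sq_nonneg (|z| - 1)]
      _ ≤ exp (z ^ 2 / 2) := add_one_le_exp _
  have hexp : |z| * exp (-z ^ 2 / 2) ≤ 1 := by
    rw [neg_div, exp_neg, ← div_eq_mul_inv]
    exact div_le_one_of_le₀ hz (exp_pos _).le
  unfold stdNormalPDF
  calc |z| * ((√(2 * π))⁻¹ * exp (-z ^ 2 / 2)) = (√(2 * π))⁻¹ * (|z| * exp (-z ^ 2 / 2)) := by
        ring
    _ ≤ (√(2 * π))⁻¹ := mul_le_of_le_one_right (by positivity) hexp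

lemma stdNormalPDF_mul_stdNormalPDF (a b : ℝ) :
    stdNormalPDF a * stdNormalPDF b = (√(2 * π))⁻¹ ^ 2 * exp (-(a ^ 2 + b ^ 2) / 2) := by
  unfold stdNormalPDF
  rw [show -(a ^ 2 + b ^ 2) / 2 = -a ^ 2 / 2 + -b ^ 2 / 2 by ring, exp_add]
  ring

lemma stdNormalPDF_div_mul_lt {σ y₁ y₂ θ₁ θ₂ : ℝ} (hσ : σ ≠ 0) (hy : y₁ < y₂) (hθ : θ₁ < θ₂) :
    stdNormalPDF ((y₁ - θ₂) / σ) * stdNormalPDF ((y₂ - θ₁) / σ) <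
      stdNormalPDF ((y₂ - θ₂) / σ) * stdNormalPDF ((y₁ - θ₁) / σ) := by
  rw [stdNormalPDF_mul_stdNormalPDF, stdNormalPDF_mul_stdNormalPDF]
  have hsq : ((y₁ - θ₂) / σ) ^ 2 + ((y₂ - θ₁) / σ) ^ 2 =
      ((y₂ - θ₂) / σ) ^ 2 + ((y₁ - θ₁) / σ) ^ 2 + 2 * ((y₂ - y₁) * (θ₂ - θ₁)) / σ ^ 2 := by
    field_simp
    ring
  have hgap : 0 < 2 * ((y₂ - y₁) * (θ₂ - θ₁)) / σ ^ 2 := by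
    have := mul_pos (sub_pos.2 hy) (sub_pos.2 hθ)
    positivity
  exact mul_lt_mul_of_pos_left (exp_lt_exp.2 (by linarith)) (by positivity)

lemma abs_mul_stdNormalPDF_div_le {σ : ℝ} (hσ : σ ≠ 0) (y θ : ℝ) :
    |θ| * stdNormalPDF ((y - θ) / σ) ≤ (|y| + |σ|) * (√(2 * π))⁻¹ := by
  set z := (y - θ) / σ
  have hθ : θ = y - σ * z := by
    simp only [z]
    field_simp
    ring
  have hφ := (stdNormalPDF_pos z).le
  calc |θ| * stdNormalPDF z ≤ (|y| + |σ| * |z|) * stdNormalPDF z := by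
        gcongr
        rw [hθ, ← abs_mul]
        exact abs_sub _ _
    _ = |y| * stdNormalPDF z + |σ| * (|z| * stdNormalPDF z) := by ring
    _ ≤ |y| * (√(2 * π))⁻¹ + |σ| * (√(2 * π))⁻¹ := by
        gcongr
        exacts [stdNormalPDF_le z, abs_mul_stdNormalPDF_le z]
    _ = (|y| + |σ|) * (√(2 * π))⁻¹ := by ring

section Integrability

variable {G : Measure ℝ} [IsFiniteMeasure G]

lemma integrable_stdNormalPDF_comp {u : ℝ → ℝ} (hu : Measurable u) :
    Integrable (fun θ ↦ stdNormalPDF (u θ)) G :=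
  .of_bound (by fun_prop) _ <|
    ae_of_all _ fun θ ↦ by
      rw [norm_of_nonneg (stdNormalPDF_pos _).le]
      exact stdNormalPDF_le _

lemma integral_stdNormalPDF_comp_pos [NeZero G] {u : ℝ → ℝ} (hu : Measurable u) :
    0 < ∫ θ, stdNormalPDF (u θ) ∂G := by
  rw [integral_pos_iff_support_of_nonneg (fun θ ↦ (stdNormalPDF_pos _).le)
    (integrable_stdNormalPDF_comp hu)]
  simpa [Function.support, (stdNormalPDF_pos _).ne'] using NeZero.ne G

lemma integrable_mul_stdNormalPDF_div {σ : ℝ} (hσ : σ ≠ 0) (y : ℝ) :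
    Integrable (fun θ ↦ θ * stdNormalPDF ((y - θ) / σ)) G :=
  .of_bound (by fun_prop) _ <| ae_of_all _ fun θ ↦ by
    rw [norm_mul, norm_of_nonneg (stdNormalPDF_pos _).le]
    exact abs_mul_stdNormalPDF_div_le hσ y θ

end Integrability

lemma exists_eq_dirac_of_ae_fst_eq_snd {α : Type*} [MeasurableSpace α] {μ : Measure α}
    [IsProbabilityMeasure μ] (h : ∀ᵐ p ∂μ.prod μ, p.1 = p.2) : ∃ x, μ = Measure.dirac x := by
  obtain ⟨x, hx⟩ := (Measure.ae_ae_of_ae_prod h).exists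
  refine ⟨x, ?_⟩
  simpa using (ProbabilityTheory.hasLaw_dirac_of_ae_eq (X := id) (hx.mono fun _ ↦ Eq.symm)).map_eq

lemma integral_prod_mul_sub_mul {α : Type*} [MeasurableSpace α] {μ : Measure α} [SFinite μ]
    {a b c d : α → ℝ} (ha : Integrable a μ) (hb : Integrable b μ) (hc : Integrable c μ)
    (hd : Integrable d μ) :
    ∫ p, (a p.1 * b p.2 - c p.1 * d p.2) ∂μ.prod μ =
      (∫ x, a x ∂μ) * (∫ x, b x ∂μ) - (∫ x, c x ∂μ) * ∫ x, d x ∂μ := by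
  rw [integral_sub (ha.mul_prod hb) (hc.mul_prod hd), integral_prod_mul, integral_prod_mul]

/-- `hfg` says that `g / f` is strictly increasing (a strict monotone likelihood ratio), so
reweighting `G` by `g` instead of `f` strictly raises the mean. -/
theorem integral_mul_integral_lt_of_mul_lt_mul {G : Measure ℝ} [SFinite G] {f g : ℝ → ℝ}
    (hf : Integrable f G) (hg : Integrable g G) (hf' : Integrable (fun θ ↦ θ * f θ) G)
    (hg' : Integrable (fun θ ↦ θ * g θ) G) (hfg : ∀ θ₁ θ₂, θ₁ < θ₂ → f θ₂ * g θ₁ < g θ₂ * f θ₁)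
    (hG : ¬ ∀ᵐ p ∂G.prod G, p.1 = p.2) :
    (∫ θ, θ * f θ ∂G) * ∫ θ, g θ ∂G < (∫ θ, θ * g θ ∂G) * ∫ θ, f θ ∂G := by
  set h : ℝ × ℝ → ℝ := fun p ↦ (p.1 * g p.1 * f p.2 - p.1 * f p.1 * g p.2) +
    (f p.1 * (p.2 * g p.2) - g p.1 * (p.2 * f p.2))
  have h_eq (p : ℝ × ℝ) : h p = (p.1 - p.2) * (g p.1 * f p.2 - f p.1 * g p.2) := by ring
  have h_pos {p : ℝ × ℝ} (hp : p.1 ≠ p.2) : 0 < h p := by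
    rw [h_eq]
    rcases hp.lt_or_gt with hlt | hgt
    · nlinarith [hfg _ _ hlt]
    · nlinarith [hfg _ _ hgt]
  have h_support : Function.support h = {p | p.1 ≠ p.2} := by
    ext p
    exact ⟨fun hp heq ↦ hp (by rw [h_eq, heq, sub_self, zero_mul]), fun hp ↦ (h_pos hp).ne'⟩
  have h_int₁ : Integrable (fun p : ℝ × ℝ ↦ p.1 * g p.1 * f p.2 - p.1 * f p.1 * g p.2)
      (G.prod G) :=
    (hg'.mul_prod hf).sub (hf'.mul_prod hg)
  have h_int₂ : Integrable (fun p : ℝ × ℝ ↦ f p.1 * (p.2 * g p.2) - g p.1 * (p.2 * f p.2))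
      (G.prod G) :=
    (hf.mul_prod hg').sub (hg.mul_prod hf')
  have h_int : Integrable h (G.prod G) := h_int₁.add h_int₂
  have h_integral : ∫ p, h p ∂G.prod G =
      2 * ((∫ θ, θ * g θ ∂G) * (∫ θ, f θ ∂G) - (∫ θ, θ * f θ ∂G) * ∫ θ, g θ ∂G) := by
    rw [integral_add h_int₁ h_int₂, integral_prod_mul_sub_mul hg' hf hf' hg,
      integral_prod_mul_sub_mul hf hg' hg hf']
    ring
  have h_integral_pos : 0 < ∫ p, h p ∂G.prod G := by
    rw [integral_pos_iff_support_of_nonneg _ h_int, h_support, pos_iff_ne_zero]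
    · simpa [ae_iff] using hG
    · intro p
      by_cases hp : p.1 = p.2
      · simp [h_eq, hp]
      · exact (h_pos hp).le
  linarith

theorem postMean_strictMono_general (σ : ℝ) (hσ : 0 < σ)
    (G : Measure ℝ) [IsProbabilityMeasure G] :
    ((¬ ∃ θ₀ : ℝ, G = Measure.dirac θ₀) → StrictMono (postMean σ G)) ∧
    (∀ θ₀ : ℝ, G = Measure.dirac θ₀ → ∀ y : ℝ, postMean σ G y = θ₀) := by
  refine ⟨fun hG y₁ y₂ hy ↦ ?_, fun θ₀ hG y ↦ ?_⟩
  · have h_offdiag : ¬ ∀ᵐ p ∂G.prod G, p.1 = p.2 := fun h ↦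
      hG (exists_eq_dirac_of_ae_fst_eq_snd h)
    rw [postMean, postMean, div_lt_div_iff₀ (integral_stdNormalPDF_comp_pos (by fun_prop))
      (integral_stdNormalPDF_comp_pos (by fun_prop))]
    exact integral_mul_integral_lt_of_mul_lt_mul (integrable_stdNormalPDF_comp (by fun_prop))
      (integrable_stdNormalPDF_comp (by fun_prop)) (integrable_mul_stdNormalPDF_div hσ.ne' y₁)
      (integrable_mul_stdNormalPDF_div hσ.ne' y₂)
      (fun _ _ hθ ↦ stdNormalPDF_div_mul_lt hσ.ne' hy hθ) h_offdiag
  · subst hG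
    simp [postMean, (stdNormalPDF_pos _).ne']

/-- **Strict monotonicity of the Bayes rule**: if `G` is not a Dirac point mass then `δ_G`
is strictly increasing; if `G` is the point mass at `θ₀` then `δ_G ≡ θ₀`. -/
theorem postMean_strictMono (σ c : ℝ) (hσ : 0 < σ) (hc : 0 < c)
    (G : Measure ℝ) [IsProbabilityMeasure G] (hG : ∀ᵐ θ ∂G, θ ∈ Icc (-c) c) :
    ((¬ ∃ θ₀ : ℝ, G = Measure.dirac θ₀) → StrictMono (postMean σ G)) ∧
    (∀ θ₀ : ℝ, G = Measure.dirac θ₀ → ∀ y : ℝ, postMean σ G y = θ₀) :=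
  postMean_strictMono_general σ hσ G
end

section
/- SURE equals the Bayes risk at the mixture distribution: let δ : ℝ → ℝ be continuously differentiable with bounded derivative, and define SURE(δ; F) = ∫ (δ(y) − y)² dF(y) + 2σ² ∫ (δ′(y) − 1) dF(y) + σ² for a distribution F on ℝ. Let F_G be the distribution with density f_G. Then SURE(δ; F_G) = R(G, δ), where R(G, δ) = ∫ [ ∫ (δ(θ + σz) − θ)² φ(z) dz ] dG(θ) is the Bayes risk of the rule δ when θ ∼ G and Y given θ is N(θ, σ²). -/
/-!
Fix `θ` and write `Y = θ + σZ` with `Z` standard normal. Expanding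
`(δ(Y) − θ)² = (δ(Y) − Y)² + 2σZ(δ(Y) − Y) + σ²Z²` and applying Stein's identity
`E[g(Z) Z] = E[g′(Z)]` (Gaussian integration by parts) to `g(z) = δ(θ + σz) − θ − σz` turns the
cross term into `2σ² E[δ′(Y) − 1]`, so the SURE integrand and the loss have the same conditional
mean. Both integrands grow at most quadratically and `G` has bounded support, so Fubini's theorem
lets us integrate over `θ ∼ G` first, which turns the conditional means into integrals against
the mixture density `f_G`.
-/

open MeasureTheory Set

/-- The mixture (marginal) density `f_G(y) = (1/σ) ∫ φ((y−θ)/σ) dG(θ)`. -/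
noncomputable def mixDens (σ : ℝ) (G : Measure ℝ) (y : ℝ) : ℝ :=
  (1 / σ) * ∫ θ, stdNormalPDF ((y - θ) / σ) ∂G

/-- Stein's unbiased risk estimate of the rule `δ` at the distribution with density `f`
(with respect to Lebesgue measure):
`SURE(δ; F) = ∫ (δ(y) − y)² dF(y) + 2σ² ∫ (δ′(y) − 1) dF(y) + σ²`. -/
noncomputable def SURE (σ : ℝ) (δ : ℝ → ℝ) (f : ℝ → ℝ) : ℝ :=
  (∫ y, (δ y - y) ^ 2 * f y) + 2 * σ ^ 2 * (∫ y, (deriv δ y - 1) * f y) + σ ^ 2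

/-- The Bayes risk `R(G, δ) = ∫ [∫ (δ(θ + σz) − θ)² φ(z) dz] dG(θ)` of the rule `δ` when
`θ ∼ G` and `Y | θ ∼ N(θ, σ²)`. -/
noncomputable def bayesRisk (σ : ℝ) (G : Measure ℝ) (δ : ℝ → ℝ) : ℝ :=
  ∫ θ, (∫ z, (δ (θ + σ * z) - θ) ^ 2 * stdNormalPDF z) ∂G

open Real

lemma stdNormalPDF_nonneg (z : ℝ) : 0 ≤ stdNormalPDF z := by
  unfold stdNormalPDF; positivity

lemma hasDerivAt_stdNormalPDF (z : ℝ) : HasDerivAt stdNormalPDF (-(z * stdNormalPDF z)) z := by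
  have h : HasDerivAt (fun y : ℝ ↦ -y ^ 2 / 2) (-z) z := by
    simpa [neg_div] using (hasDerivAt_pow 2 z).neg.div_const 2
  exact (h.exp.const_mul _).congr_deriv (by simp only [stdNormalPDF]; ring)

lemma stdNormalPDF_eq_mul_exp (z : ℝ) :
    stdNormalPDF z = (√(2 * π))⁻¹ * exp (-2⁻¹ * z ^ 2) := by
  simp only [stdNormalPDF]
  ring_nf

lemma integrable_stdNormalPDF : Integrable stdNormalPDF := by
  simp_rw [funext stdNormalPDF_eq_mul_exp]
  exact (integrable_exp_neg_mul_sq (by norm_num)).const_mul _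

lemma integrable_sq_mul_stdNormalPDF : Integrable fun z ↦ z ^ 2 * stdNormalPDF z := by
  have h := (integrable_rpow_mul_exp_neg_mul_sq (b := 2⁻¹) (by norm_num) (s := 2) (by norm_num))
  simp_rw [stdNormalPDF_eq_mul_exp, rpow_two] at h ⊢
  exact (h.const_mul (√(2 * π))⁻¹).congr (ae_of_all _ fun z ↦ by ring)

lemma integral_stdNormalPDF : ∫ z, stdNormalPDF z = 1 := by
  simp_rw [stdNormalPDF_eq_mul_exp]
  rw [integral_const_mul, integral_gaussian, show π / 2⁻¹ = 2 * π by ring]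
  exact inv_mul_cancel₀ (by positivity)

lemma integrable_mul_stdNormalPDF_of_abs_le {h : ℝ → ℝ} (hh : AEStronglyMeasurable h)
    {a b : ℝ} (hbd : ∀ z, |h z| ≤ a + b * z ^ 2) :
    Integrable fun z ↦ h z * stdNormalPDF z := by
  refine Integrable.mono' ((integrable_stdNormalPDF.const_mul a).add
    (integrable_sq_mul_stdNormalPDF.const_mul b))
    (hh.mul continuous_stdNormalPDF.aestronglyMeasurable) (ae_of_all _ fun z ↦ ?_)
  rw [norm_mul, norm_of_nonneg (stdNormalPDF_nonneg z), Real.norm_eq_abs, Pi.add_apply,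
    ← mul_assoc, ← add_mul]
  exact mul_le_mul_of_nonneg_right (hbd z) (stdNormalPDF_nonneg z)

lemma abs_le_one_add_sq (z : ℝ) : |z| ≤ 1 + z ^ 2 := by
  nlinarith [sq_abs z, sq_nonneg (|z| - 1), abs_nonneg z]

section Stein

variable {g : ℝ → ℝ} {K : ℝ}

lemma abs_le_of_abs_deriv_le (hg : Differentiable ℝ g)
    (hK : ∀ x, |deriv g x| ≤ K) (x : ℝ) : |g x| ≤ |g 0| + K * |x| := by
  have h := convex_univ.norm_image_sub_le_of_norm_deriv_le (fun y _ ↦ hg y) (fun y _ ↦ hK y)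
    (mem_univ 0) (mem_univ x)
  simp only [Real.norm_eq_abs, sub_zero] at h
  linarith [abs_sub_abs_le_abs_sub (g x) (g 0)]

lemma integrable_mul_stdNormalPDF_of_abs_deriv_le (hg : Differentiable ℝ g)
    (hK : ∀ x, |deriv g x| ≤ K) : Integrable fun z ↦ g z * stdNormalPDF z := by
  have hK0 : 0 ≤ K := (abs_nonneg _).trans (hK 0)
  refine integrable_mul_stdNormalPDF_of_abs_le hg.continuous.aestronglyMeasurable
    (a := |g 0| + K) (b := K) fun z ↦ ?_
  nlinarith [abs_le_of_abs_deriv_le hg hK z, abs_le_one_add_sq z]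

lemma integrable_mul_mul_stdNormalPDF_of_abs_deriv_le (hg : Differentiable ℝ g)
    (hK : ∀ x, |deriv g x| ≤ K) : Integrable fun z ↦ g z * (z * stdNormalPDF z) := by
  have hbd : ∀ z, |g z * z| ≤ |g 0| + (|g 0| + K) * z ^ 2 := fun z ↦ by
    rw [abs_mul]
    have hz : K * |z| * |z| = K * z ^ 2 := by rw [mul_assoc, abs_mul_abs_self, sq]
    nlinarith [mul_le_mul_of_nonneg_right (abs_le_of_abs_deriv_le hg hK z) (abs_nonneg z),
      mul_le_mul_of_nonneg_left (abs_le_one_add_sq z) (abs_nonneg (g 0))]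
  simpa only [mul_assoc] using integrable_mul_stdNormalPDF_of_abs_le
    (hg.continuous.fun_mul continuous_id').aestronglyMeasurable hbd

lemma stein_identity (hg : Differentiable ℝ g) (hK : ∀ x, |deriv g x| ≤ K) :
    ∫ z, g z * (z * stdNormalPDF z) = ∫ z, deriv g z * stdNormalPDF z := by
  have hg' : Integrable fun z ↦ deriv g z * stdNormalPDF z :=
    integrable_mul_stdNormalPDF_of_abs_le (measurable_deriv g).aestronglyMeasurable
      (a := K) (b := 0) (by simpa using hK)
  have h := integral_mul_deriv_eq_deriv_mul_of_integrable (u' := deriv g)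
    (v' := fun z ↦ -(z * stdNormalPDF z)) (fun x _ ↦ (hg x).hasDerivAt)
    (fun x _ ↦ hasDerivAt_stdNormalPDF x)
    (by simpa only [Pi.mul_def, mul_neg] using
      (integrable_mul_mul_stdNormalPDF_of_abs_deriv_le hg hK).fun_neg) hg'
    (integrable_mul_stdNormalPDF_of_abs_deriv_le hg hK)
  simpa only [mul_neg, integral_neg, neg_inj] using h

lemma sq_le_of_abs_deriv_le (hg : Differentiable ℝ g) (hK : ∀ x, |deriv g x| ≤ K) (x : ℝ) :
    g x ^ 2 ≤ 2 * g 0 ^ 2 + 2 * K ^ 2 * x ^ 2 := by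
  have h := abs_le_of_abs_deriv_le hg hK x
  nlinarith [sq_abs (g x), sq_abs (g 0), sq_abs x, sq_nonneg (|g 0| - K * |x|), abs_nonneg (g x)]

end Stein

lemma integral_sq_mul_stdNormalPDF : ∫ z, z ^ 2 * stdNormalPDF z = 1 := by
  have h := stein_identity (g := id) (K := 1) differentiable_id (by simp)
  simp only [deriv_id, one_mul, integral_stdNormalPDF, id, ← mul_assoc, ← sq] at h
  exact h

lemma integral_abs_mul_stdNormalPDF_le {h : ℝ → ℝ} (hh : AEStronglyMeasurable h)
    {a b : ℝ} (hbd : ∀ z, |h z| ≤ a + b * z ^ 2) :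
    ∫ z, |h z| * stdNormalPDF z ≤ a + b :=
  calc ∫ z, |h z| * stdNormalPDF z
      ≤ ∫ z, a * stdNormalPDF z + b * (z ^ 2 * stdNormalPDF z) := by
        refine integral_mono (integrable_mul_stdNormalPDF_of_abs_le
          (continuous_abs.comp_aestronglyMeasurable hh) (by simpa using hbd))
          ((integrable_stdNormalPDF.const_mul a).add (integrable_sq_mul_stdNormalPDF.const_mul b))
          fun z ↦ ?_
        rw [← mul_assoc, ← add_mul]
        exact mul_le_mul_of_nonneg_right (hbd z) (stdNormalPDF_nonneg z)
    _ = a + b := by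
        rw [integral_add (integrable_stdNormalPDF.const_mul a)
          (integrable_sq_mul_stdNormalPDF.const_mul b), integral_const_mul, integral_const_mul,
          integral_stdNormalPDF, integral_sq_mul_stdNormalPDF, mul_one, mul_one]

lemma integral_sq_add_mul_mul_stdNormalPDF {u : ℝ → ℝ} {K : ℝ} (hu : Differentiable ℝ u)
    (hK : ∀ x, |deriv u x| ≤ K) (σ : ℝ) :
    ∫ z, (u z + σ * z) ^ 2 * stdNormalPDF z
      = (∫ z, u z ^ 2 * stdNormalPDF z) + 2 * σ * (∫ z, deriv u z * stdNormalPDF z) + σ ^ 2 := by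
  have hu2 : Integrable fun z ↦ u z ^ 2 * stdNormalPDF z := by
    refine integrable_mul_stdNormalPDF_of_abs_le (hu.continuous.pow 2).aestronglyMeasurable
      fun z ↦ (abs_of_nonneg (sq_nonneg _)).trans_le (sq_le_of_abs_deriv_le hu hK z)
  have hcross := (integrable_mul_mul_stdNormalPDF_of_abs_deriv_le hu hK).const_mul (2 * σ)
  have hz2 := integrable_sq_mul_stdNormalPDF.const_mul (σ ^ 2)
  calc ∫ z, (u z + σ * z) ^ 2 * stdNormalPDF z
      = ∫ z, u z ^ 2 * stdNormalPDF z + 2 * σ * (u z * (z * stdNormalPDF z))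
          + σ ^ 2 * (z ^ 2 * stdNormalPDF z) := integral_congr_ae (ae_of_all _ fun z ↦ by ring)
    _ = _ := by
      rw [integral_add (hu2.fun_add hcross) hz2, integral_add hu2 hcross, integral_const_mul,
        integral_const_mul, integral_sq_mul_stdNormalPDF, stein_identity hu hK, mul_one]

lemma integral_sq_comp_affine_add_mul_mul_stdNormalPDF {g : ℝ → ℝ} {K : ℝ}
    (hg : Differentiable ℝ g) (hK : ∀ x, |deriv g x| ≤ K) (θ σ : ℝ) :
    ∫ z, (g (θ + σ * z) + σ * z) ^ 2 * stdNormalPDF z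
      = (∫ z, g (θ + σ * z) ^ 2 * stdNormalPDF z)
        + 2 * σ ^ 2 * (∫ z, deriv g (θ + σ * z) * stdNormalPDF z) + σ ^ 2 := by
  have hderiv : ∀ z, deriv (fun z ↦ g (θ + σ * z)) z = σ * deriv g (θ + σ * z) := fun z ↦ by
    simpa only [deriv_comp_const_add, smul_eq_mul] using
      deriv_comp_mul_left (f := fun w ↦ g (θ + w)) (c := σ) (x := z)
  have hσK : ∀ z, |deriv (fun z ↦ g (θ + σ * z)) z| ≤ |σ| * K := fun z ↦ by
    rw [hderiv, abs_mul]
    exact mul_le_mul_of_nonneg_left (hK _) (abs_nonneg σ)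
  have hu : Differentiable ℝ fun z ↦ g (θ + σ * z) := hg.comp (by fun_prop)
  rw [integral_sq_add_mul_mul_stdNormalPDF hu hσK, funext hderiv]
  simp_rw [mul_assoc σ, integral_const_mul]
  ring

noncomputable def normalPDF (σ θ y : ℝ) : ℝ := (1 / σ) * stdNormalPDF ((y - θ) / σ)

lemma normalPDF_nonneg {σ : ℝ} (hσ : 0 ≤ σ) (θ y : ℝ) : 0 ≤ normalPDF σ θ y :=
  mul_nonneg (by positivity) (stdNormalPDF_nonneg _)

lemma mixDens_eq_integral_normalPDF (σ : ℝ) (G : Measure ℝ) (y : ℝ) :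
    mixDens σ G y = ∫ θ, normalPDF σ θ y ∂G :=
  (integral_const_mul _ _).symm

lemma integral_comp_affine_mul_stdNormalPDF {σ : ℝ} (hσ : 0 < σ) (θ : ℝ) (h : ℝ → ℝ) :
    ∫ z, h (θ + σ * z) * stdNormalPDF z = ∫ y, h y * normalPDF σ θ y := by
  have hz : ∀ z, h (θ + σ * z) * stdNormalPDF z = σ * (h (θ + σ * z) * normalPDF σ θ (θ + σ * z)) :=
    fun z ↦ by
      simp only [normalPDF, add_sub_cancel_left, mul_div_cancel_left₀ z hσ.ne']
      field_simp
  simp_rw [hz]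
  rw [integral_const_mul,
    Measure.integral_comp_mul_left (fun w ↦ h (θ + w) * normalPDF σ θ (θ + w)),
    integral_add_left_eq_self (fun y ↦ h y * normalPDF σ θ y), abs_of_pos (inv_pos.2 hσ),
    smul_eq_mul, ← mul_assoc, mul_inv_cancel₀ hσ.ne', one_mul]

lemma integrable_mul_normalPDF {σ : ℝ} (hσ : 0 < σ) {θ : ℝ} {h : ℝ → ℝ}
    (hint : Integrable fun z ↦ h (θ + σ * z) * stdNormalPDF z) :
    Integrable fun y ↦ h y * normalPDF σ θ y := by
  refine (((hint.comp_div hσ.ne').comp_sub_right θ).const_mul (1 / σ)).congr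
    (ae_of_all _ fun y ↦ ?_)
  simp only [normalPDF, mul_div_cancel₀ (y - θ) hσ.ne', add_sub_cancel]
  ring

lemma abs_comp_affine_le {h : ℝ → ℝ} {a b : ℝ} (hb : 0 ≤ b) (hbd : ∀ y, |h y| ≤ a + b * y ^ 2)
    (θ σ z : ℝ) : |h (θ + σ * z)| ≤ (a + 2 * b * θ ^ 2) + 2 * b * σ ^ 2 * z ^ 2 := by
  nlinarith [hbd (θ + σ * z), sq_nonneg (θ - σ * z)]

section Fubini

variable {σ : ℝ} {G : Measure ℝ} [IsFiniteMeasure G] {h : ℝ → ℝ} {a b : ℝ}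

lemma integrable_prod_mul_normalPDF (hσ : 0 < σ) (hG : Integrable (fun θ ↦ θ ^ 2) G)
    (hh : Measurable h) (hb : 0 ≤ b) (hbd : ∀ y, |h y| ≤ a + b * y ^ 2) :
    Integrable (Function.uncurry fun θ y ↦ h y * normalPDF σ θ y) (G.prod volume) := by
  have hmeas : AEStronglyMeasurable (Function.uncurry fun θ y ↦ h y * normalPDF σ θ y)
      (G.prod volume) :=
    ((hh.comp measurable_snd).mul (by unfold normalPDF; fun_prop : Continuous fun p : ℝ × ℝ ↦
      normalPDF σ p.1 p.2).measurable).aestronglyMeasurable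
  have hz : ∀ θ, AEStronglyMeasurable (fun z ↦ h (θ + σ * z)) :=
    fun θ ↦ (hh.comp (by fun_prop)).aestronglyMeasurable
  refine (integrable_prod_iff hmeas).2 ⟨ae_of_all _ fun θ ↦ ?_, ?_⟩
  · exact integrable_mul_normalPDF hσ
      (integrable_mul_stdNormalPDF_of_abs_le (hz θ) (abs_comp_affine_le hb hbd θ σ))
  refine Integrable.mono' (((integrable_const (a + 2 * b * σ ^ 2)).add
    (hG.const_mul (2 * b)))) hmeas.norm.integral_prod_right' (ae_of_all _ fun θ ↦ ?_)
  have hnorm : ∫ y, ‖h y * normalPDF σ θ y‖ = ∫ z, |h (θ + σ * z)| * stdNormalPDF z := by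
    simp only [norm_mul, Real.norm_eq_abs, abs_of_nonneg (normalPDF_nonneg hσ.le θ _)]
    exact (integral_comp_affine_mul_stdNormalPDF hσ θ fun y ↦ |h y|).symm
  have hle := integral_abs_mul_stdNormalPDF_le (hz θ) (abs_comp_affine_le hb hbd θ σ)
  simp only [Function.uncurry_apply_pair, Pi.add_apply]
  rw [hnorm, norm_of_nonneg (integral_nonneg fun z ↦
    mul_nonneg (abs_nonneg _) (stdNormalPDF_nonneg z))]
  linarith

lemma integrable_integral_comp_affine_mul_stdNormalPDF (hσ : 0 < σ)
    (hG : Integrable (fun θ ↦ θ ^ 2) G) (hh : Measurable h) (hb : 0 ≤ b)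
    (hbd : ∀ y, |h y| ≤ a + b * y ^ 2) :
    Integrable (fun θ ↦ ∫ z, h (θ + σ * z) * stdNormalPDF z) G := by
  simp_rw [integral_comp_affine_mul_stdNormalPDF hσ _ h]
  exact (integrable_prod_mul_normalPDF hσ hG hh hb hbd).integral_prod_left

lemma integral_mul_mixDens (hσ : 0 < σ) (hG : Integrable (fun θ ↦ θ ^ 2) G)
    (hh : Measurable h) (hb : 0 ≤ b) (hbd : ∀ y, |h y| ≤ a + b * y ^ 2) :
    ∫ y, h y * mixDens σ G y = ∫ θ, (∫ z, h (θ + σ * z) * stdNormalPDF z) ∂G := by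
  simp_rw [mixDens_eq_integral_normalPDF, ← integral_const_mul]
  rw [← integral_integral_swap (integrable_prod_mul_normalPDF hσ hG hh hb hbd)]
  exact integral_congr_ae (ae_of_all _ fun θ ↦ (integral_comp_affine_mul_stdNormalPDF hσ θ h).symm)

end Fubini

lemma integrable_sq_of_ae_mem_Icc {G : Measure ℝ} [IsFiniteMeasure G] {c : ℝ}
    (hG : ∀ᵐ θ ∂G, θ ∈ Icc (-c) c) : Integrable (fun θ ↦ θ ^ 2) G := by
  refine Integrable.of_bound (by fun_prop) (c ^ 2) (hG.mono fun θ hθ ↦ ?_)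
  rw [Real.norm_eq_abs, abs_of_nonneg (sq_nonneg θ)]
  exact sq_le_sq' hθ.1 hθ.2

section Rule

variable {δ : ℝ → ℝ} {M : ℝ}

lemma deriv_sub_id (hδ : Differentiable ℝ δ) (y : ℝ) :
    deriv (fun y ↦ δ y - y) y = deriv δ y - 1 := by
  rw [deriv_fun_sub (hδ y) differentiableAt_fun_id, deriv_id'']

lemma abs_deriv_sub_one_le (hM : ∀ y, |deriv δ y| ≤ M) (y : ℝ) : |deriv δ y - 1| ≤ M + 1 :=
  (abs_sub _ _).trans (by simpa using hM y)

lemma abs_deriv_sub_id_le (hδ : Differentiable ℝ δ) (hM : ∀ y, |deriv δ y| ≤ M) (y : ℝ) :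
    |deriv (fun y ↦ δ y - y) y| ≤ M + 1 :=
  deriv_sub_id hδ y ▸ abs_deriv_sub_one_le hM y

lemma integral_sq_sub_mul_stdNormalPDF (hδ : Differentiable ℝ δ) (hM : ∀ y, |deriv δ y| ≤ M)
    (θ σ : ℝ) :
    ∫ z, (δ (θ + σ * z) - θ) ^ 2 * stdNormalPDF z
      = (∫ z, (δ (θ + σ * z) - (θ + σ * z)) ^ 2 * stdNormalPDF z)
        + 2 * σ ^ 2 * (∫ z, (deriv δ (θ + σ * z) - 1) * stdNormalPDF z) + σ ^ 2 := by
  have h := integral_sq_comp_affine_add_mul_mul_stdNormalPDF (g := fun y ↦ δ y - y)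
    (hδ.sub differentiable_id) (abs_deriv_sub_id_le hδ hM) θ σ
  simp_rw [deriv_sub_id hδ] at h
  rw [← h]
  congr with z
  ring

end Rule

theorem sure_eq_bayesRisk_general (σ c : ℝ) (hσ : 0 < σ)
    (G : Measure ℝ) [IsProbabilityMeasure G] (hG : ∀ᵐ θ ∂G, θ ∈ Icc (-c) c)
    (δ : ℝ → ℝ) (hδ : ContDiff ℝ 1 δ) (M : ℝ) (hM : ∀ y : ℝ, |deriv δ y| ≤ M) :
    SURE σ δ (mixDens σ G) = bayesRisk σ G δ := by
  have hδd : Differentiable ℝ δ := hδ.differentiable one_ne_zero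
  have hG2 := integrable_sq_of_ae_mem_Icc hG
  have hsqm : Measurable fun y ↦ (δ y - y) ^ 2 :=
    ((hδd.continuous.sub continuous_id).pow 2).measurable
  have hsqbd : ∀ y, |(δ y - y) ^ 2| ≤ _ + 2 * (M + 1) ^ 2 * y ^ 2 := fun y ↦
    (abs_of_nonneg (sq_nonneg _)).trans_le
      (sq_le_of_abs_deriv_le (hδd.sub differentiable_id) (abs_deriv_sub_id_le hδd hM) y)
  have hlinm : Measurable fun y ↦ deriv δ y - 1 := (measurable_deriv δ).sub_const 1
  have hlinbd : ∀ y, |deriv δ y - 1| ≤ (M + 1) + 0 * y ^ 2 := fun y ↦ by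
    simpa using abs_deriv_sub_one_le hM y
  have hA := integrable_integral_comp_affine_mul_stdNormalPDF hσ hG2 hsqm (by positivity) hsqbd
  have hB := (integrable_integral_comp_affine_mul_stdNormalPDF hσ hG2 hlinm le_rfl hlinbd).const_mul
    (2 * σ ^ 2)
  rw [SURE, integral_mul_mixDens hσ hG2 hsqm (by positivity) hsqbd,
    integral_mul_mixDens hσ hG2 hlinm le_rfl hlinbd, bayesRisk,
    integral_congr_ae (ae_of_all _ fun θ ↦ integral_sq_sub_mul_stdNormalPDF hδd hM θ σ),
    integral_add (hA.fun_add hB) (integrable_const _), integral_add hA hB, integral_const_mul,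
    integral_const, probReal_univ, one_smul]

/-- **SURE equals the Bayes risk at the mixture distribution**: `SURE(δ; F_G) = R(G, δ)`. -/
theorem sure_eq_bayesRisk (σ c : ℝ) (hσ : 0 < σ) (hc : 0 < c)
    (G : Measure ℝ) [IsProbabilityMeasure G] (hG : ∀ᵐ θ ∂G, θ ∈ Icc (-c) c)
    (δ : ℝ → ℝ) (hδ : ContDiff ℝ 1 δ) (M : ℝ) (hM : ∀ y : ℝ, |deriv δ y| ≤ M) :
    SURE σ δ (mixDens σ G) = bayesRisk σ G δ :=
  sure_eq_bayesRisk_general σ c hσ G hG δ hδ M hM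
end
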